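/- Let M be a matroid of rank k ≥ 2 on finite ground set X, d a negative-type distance on X, OPT a basis of M maximizing the dispersion. Suppose a sequence of bases A_0, A_1, ..., A_ℓ satisfies d(A_{i+1}) − d(A_i) ≥ max over feasible single-element exchanges of the improvement (i.e., A_{i+1} is a best single-exchange improvement of A_i whenever an improving exchange exists). Then d(A_ℓ) ≥ (1 − (1−1/k)^ℓ)·(1 − 4/k)·d(OPT). -/

import Mathlib

open Finset

/-- `d` is a distance of negative type on the finite type `X`. -/
def NegType {X : Type*} [Fintype X] (d : X → X → ℝ) : Prop :=
  ∀ x : X → ℝ, ∑ i, x i = 0 → ∑ i, ∑ j, x i * d i j * x j ≤ 0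

/-- The dispersion of a finite set: sum of distances over unordered pairs. -/
noncomputable def disp {X : Type*} (d : X → X → ℝ) (A : Finset X) : ℝ :=
  (∑ a ∈ A, ∑ b ∈ A, d a b) / 2

/-- Sum of all distances between two sets. -/
def dsum {X : Type*} (d : X → X → ℝ) (A B : Finset X) : ℝ :=
  ∑ a ∈ A, ∑ b ∈ B, d a b

/-!
Brualdi's bijection `π : A → O` between two bases (a Hall matching, whose Hall condition comes
from fundamental circuits) makes every swap `a ↦ π a` feasible. The best swap gains at least the
average gain of these `k` swaps, and the two cross terms of that average are controlled by the
negative-type inequality applied to `1_O - 1_A` and to `k e_a + k e_b - 2 · 1_A`. This gives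
`k² · gain ≥ (k - 2)(d(O) + d(A)) - 2k d(A)`, and an induction on `ℓ` turns this recurrence into
the approximation bound.
-/

section Dispersion

variable {X : Type*} {d : X → X → ℝ}

theorem disp_eq_dsum (A : Finset X) : disp d A = dsum d A A / 2 := rfl

theorem dsum_comm (hsymm : ∀ a b, d a b = d b a) (A B : Finset X) :
    dsum d A B = dsum d B A :=
  sum_comm.trans <| sum_congr rfl fun _ _ => sum_congr rfl fun _ _ => hsymm _ _

@[simp]
theorem dsum_singleton_left (a : X) (B : Finset X) : dsum d {a} B = ∑ b ∈ B, d a b := by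
  simp [dsum]

theorem sum_dsum_singleton_left (A B : Finset X) : ∑ a ∈ A, dsum d {a} B = dsum d A B := by
  simp [dsum]

theorem disp_nonneg (hnonneg : ∀ a b, 0 ≤ d a b) (A : Finset X) : 0 ≤ disp d A :=
  div_nonneg (sum_nonneg fun _ _ => sum_nonneg fun _ _ => hnonneg _ _) zero_le_two

variable [DecidableEq X]

theorem disp_insert (hsymm : ∀ a b, d a b = d b a) (hdiag : ∀ a, d a a = 0) {C : Finset X}
    {b : X} (hb : b ∉ C) : disp d (insert b C) = disp d C + dsum d {b} C := by
  simp only [disp, sum_insert hb, hdiag, sum_add_distrib, dsum_singleton_left]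
  rw [sum_congr rfl fun x _ => hsymm x b]
  ring

theorem disp_insert_erase_sub_disp (hsymm : ∀ a b, d a b = d b a) (hdiag : ∀ a, d a a = 0)
    {A : Finset X} {a b : X} (ha : a ∈ A) (hb : b ∉ A) :
    disp d (insert b (A.erase a)) - disp d A = dsum d {b} A - d b a - dsum d {a} A := by
  have hA := disp_insert hsymm hdiag (notMem_erase a A)
  rw [insert_erase ha] at hA
  rw [disp_insert hsymm hdiag fun h => hb (mem_of_mem_erase h), hA]
  simp only [dsum_singleton_left, ← sum_erase_add A _ ha, hdiag]
  ring

theorem NegType.sum_mul_dsum_nonpos [Fintype X] (hneg : NegType d) {ι : Type*} [Fintype ι]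
    (w : ι → ℝ) (S : ι → Finset X) (hw : ∑ i, w i * #(S i) = 0) :
    ∑ i, ∑ j, w i * w j * dsum d (S i) (S j) ≤ 0 := by
  set x : X → ℝ := fun p => ∑ i, if p ∈ S i then w i else 0
  have hx : ∑ p, x p = 0 := by
    rw [sum_comm]; simpa [sum_ite_mem, mul_comm] using hw
  have hterm : ∀ i j, w i * w j * dsum d (S i) (S j) =
      ∑ p, ∑ q, (if p ∈ S i then w i else 0) * d p q * (if q ∈ S j then w j else 0) := by
    intro i j
    simp only [ite_mul, zero_mul, mul_ite, mul_zero, sum_ite_irrel, sum_const_zero,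
      sum_ite_mem, univ_inter, dsum, mul_sum]
    exact sum_congr rfl fun _ _ => sum_congr rfl fun _ _ => by ring
  calc ∑ i, ∑ j, w i * w j * dsum d (S i) (S j)
      = ∑ p, ∑ q, x p * d p q * x q := by
        simp only [hterm, x, sum_mul, mul_sum]
        simp_rw [sum_comm (s := (univ : Finset ι)) (t := (univ : Finset X))]
        exact sum_congr rfl fun _ _ => sum_congr rfl fun _ _ => sum_comm
    _ ≤ 0 := hneg x hx

variable [Fintype X]

theorem NegType.nonneg (hneg : NegType d) (hsymm : ∀ a b, d a b = d b a)
    (hdiag : ∀ a, d a a = 0) (a b : X) : 0 ≤ d a b := by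
  have h := hneg.sum_mul_dsum_nonpos ![1, -1] ![{a}, {b}] (by simp)
  simp only [Fin.sum_univ_two, Matrix.cons_val_zero, Matrix.cons_val_one, dsum_singleton_left,
    sum_singleton, hdiag, hsymm b a] at h
  linarith

theorem NegType.dsum_self_add_dsum_self_le (hneg : NegType d) (hsymm : ∀ a b, d a b = d b a)
    {A B : Finset X} (hcard : #A = #B) : dsum d A A + dsum d B B ≤ 2 * dsum d A B := by
  have h := hneg.sum_mul_dsum_nonpos ![1, -1] ![A, B] (by simp [hcard])
  simp only [Fin.sum_univ_two, Matrix.cons_val_zero, Matrix.cons_val_one,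
    dsum_comm hsymm B A] at h
  linarith

theorem NegType.card_sq_mul_le (hneg : NegType d) (hsymm : ∀ a b, d a b = d b a)
    (hdiag : ∀ a, d a a = 0) (A : Finset X) (a b : X) :
    (#A : ℝ) ^ 2 * d a b ≤ 2 * #A * (dsum d {a} A + dsum d {b} A) - 2 * dsum d A A := by
  have h := hneg.sum_mul_dsum_nonpos ![(#A : ℝ), #A, -2] ![{a}, {b}, A]
    (by simp [Fin.sum_univ_three]; ring)
  simp only [Fin.sum_univ_three, Matrix.cons_val_zero, Matrix.cons_val_one, Matrix.cons_val_two,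
    Matrix.tail_cons, Matrix.head_cons, dsum_comm hsymm A, dsum_singleton_left,
    sum_singleton, hdiag, hsymm b a] at h ⊢
  linarith

end Dispersion

namespace Matroid

variable {α : Type*} {M : Matroid α}

theorem IsBase.mem_closure_sdiff_of_forall_not_indep {B S : Set α} {f : α} (hB : M.IsBase B)
    (hfE : f ∈ M.E) (hfB : f ∉ B) (hS : ∀ e ∈ S, ¬ M.Indep (insert f (B \ {e}))) :
    f ∈ M.closure (B \ S) := by
  have hC := hB.fundCircuit_isCircuit hfE hfB
  refine M.closure_subset_closure ?_
    (hC.mem_closure_sdiff_singleton_of_mem (M.mem_fundCircuit f B))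
  rintro e ⟨heC, hef : e ≠ f⟩
  refine ⟨(M.fundCircuit_subset_insert f B heC).resolve_left hef, fun heS => hS e heS ?_⟩
  rw [hB.indep.mem_fundCircuit_iff (by rwa [hB.closure_eq]) hfB] at heC
  rwa [Set.insert_sdiff_singleton_comm hef.symm]

theorem IsBase.card_le_card_of_spanning {B W : Finset α} (hB : M.IsBase ↑B)
    (hW : M.Spanning ↑W) : #B ≤ #W := by
  obtain ⟨B', hB', hB'W⟩ := hW.exists_isBase_subset
  rw [← Set.ncard_coe_finset, hB.ncard_eq_ncard_of_isBase hB', ← Set.ncard_coe_finset W]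
  exact Set.ncard_le_ncard hB'W W.finite_toSet

open Classical in
theorem IsBase.card_le_card_biUnion_exchangeable [DecidableEq α] {A O S : Finset α}
    (hA : M.IsBase ↑A) (hO : M.IsBase ↑O) (hS : S ⊆ A \ O) :
    #S ≤ #(S.biUnion fun e => {f ∈ O \ A | M.Indep ↑(insert f (A.erase e))}) := by
  set N := S.biUnion fun e => {f ∈ O \ A | M.Indep ↑(insert f (A.erase e))}
  have hground : (↑(A \ S ∪ N) : Set α) ⊆ M.E := by
    have hsub : A \ S ∪ N ⊆ A ∪ O :=
      union_subset_union sdiff_subset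
        (biUnion_subset.2 fun _ _ => (filter_subset _ _).trans sdiff_subset)
    refine (coe_subset.2 hsub).trans ?_
    rw [coe_union]
    exact Set.union_subset hA.subset_ground hO.subset_ground
  have hOcl : (↑O : Set α) ⊆ M.closure ↑(A \ S ∪ N) := by
    intro f hfO
    by_cases hfA : f ∈ A
    · refine M.subset_closure _ hground (mem_union_left _ (mem_sdiff.2 ⟨hfA, fun hfS => ?_⟩))
      exact (mem_sdiff.1 (hS hfS)).2 hfO
    by_cases hfN : f ∈ N
    · exact M.subset_closure _ hground (mem_union_right _ hfN)
    have hfcl := hA.mem_closure_sdiff_of_forall_not_indep (S := ↑S) (hO.subset_ground hfO) hfA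
      fun e heS hind => hfN <| mem_biUnion.2
        ⟨e, heS, mem_filter.2 ⟨mem_sdiff.2 ⟨hfO, hfA⟩, by simpa using hind⟩⟩
    refine M.closure_subset_closure ?_ hfcl
    rw [coe_union, coe_sdiff]
    exact Set.subset_union_left
  have hspan : M.Spanning ↑(A \ S ∪ N) := by
    rw [spanning_iff_ground_subset_closure hground, ← hO.closure_eq]
    exact M.closure_subset_closure_of_subset_closure hOcl
  have h₁ := hA.card_le_card_of_spanning hspan
  have h₂ := card_union_le (A \ S) N
  have h₃ := card_sdiff_of_subset (hS.trans sdiff_subset)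
  have h₄ := card_le_card (hS.trans sdiff_subset)
  omega

theorem IsBase.exists_bijOn_exchange [DecidableEq α] {A O : Finset α} (hA : M.IsBase ↑A)
    (hO : M.IsBase ↑O) :
    ∃ π : α → α, Set.BijOn π A O ∧ (∀ a ∈ A, a ∈ O → π a = a) ∧
      ∀ a ∈ A, M.Indep ↑(insert (π a) (A.erase a)) := by
  classical
  obtain ⟨g, hg_inj, hg⟩ := (all_card_le_biUnion_card_iff_exists_injective
    fun e : ↥(A \ O) => {f ∈ O \ A | M.Indep ↑(insert f (A.erase e))}).1 fun s => by
      have := hA.card_le_card_biUnion_exchangeable hO (S := s.image Subtype.val) fun _ hx => by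
        obtain ⟨y, -, rfl⟩ := mem_image.1 hx; exact y.2
      simpa [image_biUnion, card_image_of_injective _ Subtype.val_injective] using this
  simp only [mem_filter, mem_sdiff] at hg
  set π : α → α := fun a => if h : a ∈ A \ O then g ⟨a, h⟩ else a
  have hπ_moved (a : α) (h : a ∈ A \ O) : π a = g ⟨a, h⟩ := dif_pos h
  have hπ_fixed (a : α) (ha : a ∈ A) (haO : a ∈ O) : π a = a :=
    dif_neg fun h => (mem_sdiff.1 h).2 haO
  have hmaps : Set.MapsTo π A O := by
    intro a ha
    by_cases haO : a ∈ O
    · rwa [hπ_fixed a ha haO]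
    · rw [hπ_moved a (mem_sdiff.2 ⟨ha, haO⟩)]; exact (hg _).1.1
  have hπ_notMem (a : α) (ha : a ∈ A) (haO : a ∉ O) : π a ∉ A := by
    rw [hπ_moved a (mem_sdiff.2 ⟨ha, haO⟩)]; exact (hg _).1.2
  have hinj : Set.InjOn π A := by
    intro a (ha : a ∈ A) a' (ha' : a' ∈ A) h
    by_cases haO : a ∈ O <;> by_cases ha'O : a' ∈ O
    · rwa [hπ_fixed a ha haO, hπ_fixed a' ha' ha'O] at h
    · exact absurd (by rwa [← h, hπ_fixed a ha haO]) (hπ_notMem a' ha' ha'O)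
    · exact absurd (by rwa [h, hπ_fixed a' ha' ha'O]) (hπ_notMem a ha haO)
    · rw [hπ_moved a (mem_sdiff.2 ⟨ha, haO⟩), hπ_moved a' (mem_sdiff.2 ⟨ha', ha'O⟩)] at h
      exact congrArg Subtype.val (hg_inj h)
  refine ⟨π, ⟨hmaps, hinj, surjOn_of_injOn_of_card_le π hmaps hinj ?_⟩, hπ_fixed, fun a ha => ?_⟩
  · exact hO.card_le_card_of_spanning hA.spanning
  by_cases haO : a ∈ O
  · rw [hπ_fixed a ha haO, insert_erase ha]; exact hA.indep
  · rw [hπ_moved a (mem_sdiff.2 ⟨ha, haO⟩)]; exact (hg _).2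

end Matroid

theorem NegType.le_sq_card_mul_of_exchange_gain_le {X : Type*} [DecidableEq X] [Fintype X]
    {d : X → X → ℝ} (hneg : NegType d) (hsymm : ∀ a b, d a b = d b a) (hdiag : ∀ a, d a a = 0)
    {M : Matroid X} {A O : Finset X} (hA : M.IsBase ↑A) (hO : M.IsBase ↑O) (hk : 2 ≤ #A)
    {G : ℝ} (hG₀ : 0 ≤ G)
    (hG : ∀ a ∈ A, ∀ b ∉ A, M.Indep ↑(insert b (A.erase a)) →
      disp d (insert b (A.erase a)) - disp d A ≤ G) :
    ((#A : ℝ) - 2) * (disp d O + disp d A) - 2 * #A * disp d A ≤ (#A : ℝ) ^ 2 * G := by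
  obtain ⟨π, hπ, hπ_fixed, hπ_indep⟩ := hA.exists_bijOn_exchange hO
  have hgain : ∀ a ∈ A, dsum d {π a} A - d (π a) a - dsum d {a} A ≤ G := by
    intro a ha
    by_cases haO : a ∈ O
    · simpa [hπ_fixed a ha haO, hdiag] using hG₀
    have hπa : π a ∉ A := fun h =>
      haO (hπ.injOn h ha (hπ_fixed _ h (hπ.mapsTo ha)) ▸ hπ.mapsTo ha)
    rw [← disp_insert_erase_sub_disp hsymm hdiag ha hπa]
    exact hG a ha _ hπa (hπ_indep a ha)
  have hrow : ∑ a ∈ A, dsum d {π a} A = dsum d O A := by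
    rw [← sum_dsum_singleton_left]
    exact sum_nbij π hπ.mapsTo hπ.injOn hπ.surjOn fun _ _ => rfl
  set k : ℝ := (#A : ℝ)
  have hk₀ : 0 < k := by positivity
  have hsum : dsum d O A - ∑ a ∈ A, d (π a) a - dsum d A A ≤ k * G := by
    have := sum_le_card_nsmul A _ G hgain
    simpa only [sum_sub_distrib, hrow, sum_dsum_singleton_left, nsmul_eq_mul] using this
  have hpair : k * ∑ a ∈ A, d (π a) a ≤ 2 * dsum d O A := by
    have := sum_le_sum fun a (_ : a ∈ A) => hneg.card_sq_mul_le hsymm hdiag A (π a) a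
    simp only [← mul_sum, sum_sub_distrib, sum_add_distrib, hrow, sum_dsum_singleton_left,
      sum_const, nsmul_eq_mul] at this
    refine le_of_mul_le_mul_left ?_ hk₀
    linarith
  have hOA := hneg.dsum_self_add_dsum_self_le hsymm hπ.finsetCard_eq.symm
  have hk₂ : 0 ≤ k - 2 := by simp only [k, sub_nonneg]; exact_mod_cast hk
  rw [disp_eq_dsum, disp_eq_dsum]
  nlinarith [mul_le_mul_of_nonneg_left hsum hk₀.le, mul_le_mul_of_nonneg_left hOA hk₂]

theorem lower_bound_succ_of_gain {k s q x x' : ℝ} (hk : 2 ≤ k) (hs : 0 ≤ s) (hq₀ : 0 ≤ q)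
    (hq₁ : q ≤ 1) (hx : (1 - q) * (1 - 4 / k) * s ≤ x)
    (hgain : (k - 2) * (s + x) - 2 * k * x ≤ k ^ 2 * (x' - x)) :
    (1 - q * (1 - 1 / k)) * (1 - 4 / k) * s ≤ x' := by
  have hk₀ : 0 < k := by linarith
  have hslack : k ^ 2 * ((1 - q * (1 - 1 / k)) * (1 - 4 / k) * s)
      = (k - 2) * s + (k ^ 2 - k - 2) * ((1 - q) * (1 - 4 / k) * s)
        - (2 * q + 8 * (1 - q) / k) * s := by
    field_simp
    ring
  have h₁ : 0 ≤ (2 * q + 8 * (1 - q) / k) * s := by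
    have : 0 ≤ 1 - q := by linarith
    positivity
  have h₂ := mul_le_mul_of_nonneg_left hx (show 0 ≤ k ^ 2 - k - 2 by nlinarith)
  refine le_of_mul_le_mul_left ?_ (pow_pos hk₀ 2)
  linarith

theorem lower_bound_of_gains {k s : ℝ} {x : ℕ → ℝ} (hk : 2 ≤ k) (hs : 0 ≤ s) (hx₀ : 0 ≤ x 0) :
    ∀ ℓ : ℕ, (∀ i < ℓ, (k - 2) * (s + x i) - 2 * k * x i ≤ k ^ 2 * (x (i + 1) - x i)) →
      (1 - (1 - 1 / k) ^ ℓ) * (1 - 4 / k) * s ≤ x ℓ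
  | 0, _ => by simpa using hx₀
  | ℓ + 1, hgain => by
    have hr₀ : 0 ≤ 1 - 1 / k := sub_nonneg.2 (div_le_one_of_le₀ (by linarith) (by linarith))
    have hr₁ : 1 - 1 / k ≤ 1 := sub_le_self 1 (by positivity)
    rw [pow_succ]
    exact lower_bound_succ_of_gain hk hs (pow_nonneg hr₀ ℓ) (pow_le_one₀ hr₀ hr₁)
      (lower_bound_of_gains hk hs hx₀ ℓ fun i hi => hgain i (hi.trans ℓ.lt_succ_self))
      (hgain ℓ ℓ.lt_succ_self)

theorem stmt_6_general {X : Type*} [Fintype X] [DecidableEq X] (d : X → X → ℝ)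
    (hsymm : ∀ a b, d a b = d b a)
    (hdiag : ∀ a, d a a = 0) (hneg : NegType d)
    (M : Matroid X) (k : ℕ) (hk : 2 ≤ k)
    (hrank : ∀ B : Finset X, M.IsBase ↑B → B.card = k)
    (OPT : Finset X) (hOPT : M.IsBase ↑OPT)
    (ℓ : ℕ) (A : ℕ → Finset X) (hbase : ∀ i ≤ ℓ, M.IsBase ↑(A i))
    (hmono : ∀ i < ℓ, disp d (A i) ≤ disp d (A (i + 1)))
    (hbest : ∀ i < ℓ, ∀ a ∈ A i, ∀ b ∉ A i,
      M.Indep ↑(insert b ((A i).erase a)) →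
      disp d (A (i + 1)) - disp d (A i)
        ≥ disp d (insert b ((A i).erase a)) - disp d (A i)) :
    disp d (A ℓ) ≥ (1 - (1 - 1 / k) ^ ℓ) * (1 - 4 / k) * disp d OPT := by
  have hnonneg := hneg.nonneg hsymm hdiag
  refine lower_bound_of_gains (x := fun i => disp d (A i)) (by exact_mod_cast hk)
    (disp_nonneg hnonneg OPT) (disp_nonneg hnonneg (A 0)) ℓ fun i hi => ?_
  have hcard := hrank _ (hbase i hi.le)
  have hgain := hneg.le_sq_card_mul_of_exchange_gain_le hsymm hdiag (hbase i hi.le) hOPT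
    (hcard ▸ hk) (sub_nonneg.2 (hmono i hi)) (hbest i hi)
  rwa [hcard] at hgain

theorem stmt_6 {X : Type*} [Fintype X] [DecidableEq X] (d : X → X → ℝ)
    (hsymm : ∀ a b, d a b = d b a) (hnonneg : ∀ a b, 0 ≤ d a b)
    (hdiag : ∀ a, d a a = 0) (hneg : NegType d)
    (M : Matroid X) (k : ℕ) (hk : 2 ≤ k)
    (hrank : ∀ B : Finset X, M.IsBase ↑B → B.card = k)
    (OPT : Finset X) (hOPT : M.IsBase ↑OPT)
    (hOPTmax : ∀ B : Finset X, M.IsBase ↑B → disp d B ≤ disp d OPT)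
    (ℓ : ℕ) (A : ℕ → Finset X) (hbase : ∀ i ≤ ℓ, M.IsBase ↑(A i))
    (hmono : ∀ i < ℓ, disp d (A i) ≤ disp d (A (i + 1)))
    (hbest : ∀ i < ℓ, ∀ a ∈ A i, ∀ b ∉ A i,
      M.Indep ↑(insert b ((A i).erase a)) →
      disp d (A (i + 1)) - disp d (A i)
        ≥ disp d (insert b ((A i).erase a)) - disp d (A i)) :
    disp d (A ℓ) ≥ (1 - (1 - 1 / k) ^ ℓ) * (1 - 4 / k) * disp d OPT :=
  stmt_6_general d hsymm hdiag hneg M k hk hrank OPT hOPT ℓ A hbase hmono hbest
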